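/- arXiv:2210.07476 — 5 statements merged into one kernel-verified Lean document; each statement's English description precedes it below -/
import Mathlib

section
/- Let V, E be finite index sets, let H̄₂ : ℝ^V → ℝ^V and H₁ : ℝ^E → ℝ^E be symmetric linear maps, T : ℝ^E × ℝ^E → ℝ^V a bilinear map, R ∈ ℝ^E, h̃ₛ ∈ ℝ^V, g ∈ ℝ, and define the discrete shallow-water Hamiltonian H(v, h̃) := (g/2) h̃ᵀ H̄₂ h̃ + g h̃ᵀ H̄₂ h̃ₛ + ½ (H̄₂ h̃)ᵀ T(v − R, H₁(v − R)). Let D₁ : ℝ^V → ℝ^E be linear, D̄₂ := −D₁ᵀ, and for each t let Q(t) : ℝ^E → ℝ^E satisfy Q(t)ᵀ = −Q(t). If differentiable curves v : ℝ → ℝ^E, h̃ : ℝ → ℝ^V satisfy v′ = −Q(t) F(t) − D₁ B(t) and h̃′ = −D̄₂ F(t), where u := v − R, h⁰ := H̄₂ h̃, F := ½ T₁*(h⁰, H₁ u) + ½ H₁ T₂*(h⁰, u), and B := g H̄₂ (h̃ + h̃ₛ) + ½ H̄₂ T(u, H₁ u), then t ↦ H(v(t), h̃(t)) is constant. -/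
open Matrix

/-! The mass flux `F` and the Bernoulli function `B` are the partial gradients of the energy in
`v` and `h̃`: this is where the symmetry of the Hodge stars and the adjoint relations for `T`
enter. Hence along any curve `dH/dt = ⟨h̃′, B⟩ + ⟨v′, F⟩`, and the equations of motion say that
`(v′, h̃′)` is the image of `(F, B)` under the skew operator `[[-Q, -D₁], [D₁ᵀ, 0]]`, whose
quadratic form vanishes. -/

section Calculus

variable {𝕜 : Type*} [NontriviallyNormedField 𝕜] [CompleteSpace 𝕜]

theorem LinearMap.hasDerivAt_of_bilinear {E F G : Type*}
    [NormedAddCommGroup E] [NormedSpace 𝕜 E] [FiniteDimensional 𝕜 E]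
    [NormedAddCommGroup F] [NormedSpace 𝕜 F] [FiniteDimensional 𝕜 F]
    [NormedAddCommGroup G] [NormedSpace 𝕜 G]
    (B : E →ₗ[𝕜] F →ₗ[𝕜] G) {a : 𝕜 → E} {b : 𝕜 → F} {a' : E} {b' : F} {t : 𝕜}
    (ha : HasDerivAt a a' t) (hb : HasDerivAt b b' t) :
    HasDerivAt (fun s ↦ B (a s) (b s)) (B (a t) b' + B a' (b t)) t :=
  B.toContinuousBilinearMap.hasDerivAt_of_bilinear (fun _ ↦ ha) (fun _ ↦ hb)

variable {m n : Type*} [Fintype m] [Fintype n] {f g : 𝕜 → n → 𝕜} {f' g' : n → 𝕜} {t : 𝕜}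

theorem HasDerivAt.dotProduct (hf : HasDerivAt f f' t) (hg : HasDerivAt g g' t) :
    HasDerivAt (fun s ↦ f s ⬝ᵥ g s) (f t ⬝ᵥ g' + f' ⬝ᵥ g t) t :=
  (dotProductBilin 𝕜 𝕜).hasDerivAt_of_bilinear hf hg

theorem HasDerivAt.mulVec (M : Matrix m n 𝕜) (hf : HasDerivAt f f' t) :
    HasDerivAt (fun s ↦ M *ᵥ f s) (M *ᵥ f') t :=
  M.mulVecLin.toContinuousLinearMap.hasFDerivAt.comp_hasDerivAt t hf

end Calculus

theorem dotProduct_mulVec_self_eq_zero_of_transpose_eq_neg {n R : Type*} [Fintype n] [CommRing R]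
    [NoZeroDivisors R] [CharZero R] {Q : Matrix n n R} (hQ : Qᵀ = -Q) (x : n → R) :
    x ⬝ᵥ (Q *ᵥ x) = 0 := by
  have h := dotProduct_transpose_mulVec Q x x
  rwa [hQ, neg_mulVec, dotProduct_neg, CharZero.neg_eq_self_iff] at h

theorem transpose_mulVec_dotProduct_add_dotProduct_eq_zero {m n R : Type*} [Fintype m] [Fintype n]
    [CommRing R] [NoZeroDivisors R] [CharZero R] (D : Matrix m n R) {Q : Matrix m m R}
    (hQ : Qᵀ = -Q) (F : m → R) (B : n → R) :
    (Dᵀ *ᵥ F) ⬝ᵥ B + (-(Q *ᵥ F) - D *ᵥ B) ⬝ᵥ F = 0 := by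
  rw [sub_dotProduct, neg_dotProduct, dotProduct_comm (Q *ᵥ F),
    dotProduct_mulVec_self_eq_zero_of_transpose_eq_neg hQ, dotProduct_comm (Dᵀ *ᵥ F),
    dotProduct_transpose_mulVec, dotProduct_comm (D *ᵥ B)]
  ring

section ShallowWater

variable {V E : Type*} [Fintype V] [Fintype E] (Hb₂ : Matrix V V ℝ) (H₁ : Matrix E E ℝ)
  (T : (E → ℝ) →ₗ[ℝ] (E → ℝ) →ₗ[ℝ] (V → ℝ)) (T₁s T₂s : (V → ℝ) →ₗ[ℝ] (E → ℝ) →ₗ[ℝ] (E → ℝ))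
  (R : E → ℝ) (hts : V → ℝ) (g : ℝ)

noncomputable def swEnergy (v : E → ℝ) (h : V → ℝ) : ℝ :=
  (g / 2) * (h ⬝ᵥ (Hb₂ *ᵥ h)) + g * (h ⬝ᵥ (Hb₂ *ᵥ hts))
    + (1 / 2) * ((Hb₂ *ᵥ h) ⬝ᵥ T (v - R) (H₁ *ᵥ (v - R)))

noncomputable def swMassFlux (v : E → ℝ) (h : V → ℝ) : E → ℝ :=
  (1 / 2 : ℝ) • T₁s (Hb₂ *ᵥ h) (H₁ *ᵥ (v - R)) + (1 / 2 : ℝ) • (H₁ *ᵥ T₂s (Hb₂ *ᵥ h) (v - R))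

noncomputable def swBernoulli (v : E → ℝ) (h : V → ℝ) : V → ℝ :=
  g • (Hb₂ *ᵥ (h + hts)) + (1 / 2 : ℝ) • (Hb₂ *ᵥ T (v - R) (H₁ *ᵥ (v - R)))

variable {Hb₂ H₁ T T₁s T₂s}

theorem hasDerivAt_swEnergy (hHb₂ : Hb₂ᵀ = Hb₂) (hH₁ : H₁ᵀ = H₁)
    (hT₁ : ∀ x a b, x ⬝ᵥ T a b = a ⬝ᵥ T₁s x b) (hT₂ : ∀ x a b, x ⬝ᵥ T a b = b ⬝ᵥ T₂s x a)
    {v : ℝ → E → ℝ} {h : ℝ → V → ℝ} {v' : E → ℝ} {h' : V → ℝ} {t : ℝ}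
    (hv : HasDerivAt v v' t) (hh : HasDerivAt h h' t) :
    HasDerivAt (fun s ↦ swEnergy Hb₂ H₁ T R hts g (v s) (h s))
      (h' ⬝ᵥ swBernoulli Hb₂ H₁ T R hts g (v t) (h t)
        + v' ⬝ᵥ swMassFlux Hb₂ H₁ T₁s T₂s R (v t) (h t)) t := by
  have hu : HasDerivAt (fun s ↦ v s - R) v' t := hv.sub_const R
  have hpot := hh.dotProduct (hh.mulVec Hb₂)
  have hbed := hh.dotProduct (hasDerivAt_const t (Hb₂ *ᵥ hts))
  have hkin := (hh.mulVec Hb₂).dotProduct (T.hasDerivAt_of_bilinear hu (hu.mulVec H₁))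
  refine (((hpot.const_mul (g / 2)).add (hbed.const_mul g)).add
    (hkin.const_mul (1 / 2))).congr_deriv ?_
  set u := v t - R
  set x := Hb₂ *ᵥ h t
  have hpot_symm : h t ⬝ᵥ (Hb₂ *ᵥ h') = h' ⬝ᵥ x := by
    rw [← dotProduct_transpose_mulVec, hHb₂]
  have hkin_height : (Hb₂ *ᵥ h') ⬝ᵥ T u (H₁ *ᵥ u) = h' ⬝ᵥ (Hb₂ *ᵥ T u (H₁ *ᵥ u)) := by
    rw [dotProduct_comm, ← dotProduct_transpose_mulVec, hHb₂]
  have hkin_velocity : x ⬝ᵥ T u (H₁ *ᵥ v') = v' ⬝ᵥ (H₁ *ᵥ T₂s x u) := by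
    rw [hT₂, ← dotProduct_transpose_mulVec, hH₁, dotProduct_comm]
  simp only [swBernoulli, swMassFlux, mulVec_add, dotProduct_add, dotProduct_smul, smul_eq_mul,
    dotProduct_zero, hpot_symm, hkin_height, hkin_velocity, ← hT₁]
  ring

end ShallowWater

/-- Total energy conservation for the explicit discrete shallow-water Hamiltonian
`H(v, h̃) = (g/2) h̃ᵀH̄₂h̃ + g h̃ᵀH̄₂h̃ₛ + ½ (H̄₂h̃)ᵀ T(v−R, H₁(v−R))`, with symmetric
Hodge stars `H̄₂`, `H₁`, bilinear kinetic-energy wedge product `T` with topological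
adjoints `T₁s`, `T₂s`, antisymmetric PV-flux operators `Q(t)`, `D̄₂ = −D₁ᵀ`, and
equations of motion `v′ = −Q(t)F − D₁B`, `h̃′ = −D̄₂F` for the mass flux `F` and
Bernoulli function `B`. -/
theorem discrete_swe_energy_conservation
    {V E : Type*} [Fintype V] [Fintype E]
    (Hb₂ : Matrix V V ℝ) (H₁ : Matrix E E ℝ)
    (hHb₂ : Hb₂ᵀ = Hb₂) (hH₁ : H₁ᵀ = H₁)
    (T : (E → ℝ) →ₗ[ℝ] (E → ℝ) →ₗ[ℝ] (V → ℝ))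
    (T₁s T₂s : (V → ℝ) →ₗ[ℝ] (E → ℝ) →ₗ[ℝ] (E → ℝ))
    (hT₁ : ∀ (x : V → ℝ) (a b : E → ℝ), x ⬝ᵥ T a b = a ⬝ᵥ T₁s x b)
    (hT₂ : ∀ (x : V → ℝ) (a b : E → ℝ), x ⬝ᵥ T a b = b ⬝ᵥ T₂s x a)
    (R : E → ℝ) (hts : V → ℝ) (g : ℝ)
    (Ham : (E → ℝ) → (V → ℝ) → ℝ)
    (hHam : ∀ (vv : E → ℝ) (hh : V → ℝ),
      Ham vv hh = (g / 2) * (hh ⬝ᵥ (Hb₂ *ᵥ hh)) + g * (hh ⬝ᵥ (Hb₂ *ᵥ hts))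
        + (1 / 2) * ((Hb₂ *ᵥ hh) ⬝ᵥ T (vv - R) (H₁ *ᵥ (vv - R))))
    (D₁ : Matrix E V ℝ) (Q : ℝ → Matrix E E ℝ)
    (hQ : ∀ t, (Q t)ᵀ = -(Q t))
    (v : ℝ → E → ℝ) (ht : ℝ → V → ℝ)
    (u : ℝ → E → ℝ) (h0 : ℝ → V → ℝ) (F : ℝ → E → ℝ) (B : ℝ → V → ℝ)
    (hu : ∀ t, u t = v t - R)
    (hh0 : ∀ t, h0 t = Hb₂ *ᵥ ht t)
    (hF : ∀ t, F t = (1 / 2 : ℝ) • T₁s (h0 t) (H₁ *ᵥ u t)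
        + (1 / 2 : ℝ) • (H₁ *ᵥ T₂s (h0 t) (u t)))
    (hB : ∀ t, B t = g • (Hb₂ *ᵥ (ht t + hts))
        + (1 / 2 : ℝ) • (Hb₂ *ᵥ T (u t) (H₁ *ᵥ u t)))
    (hv : ∀ t, HasDerivAt v (-(Q t *ᵥ F t) - D₁ *ᵥ B t) t)
    (hh : ∀ t, HasDerivAt ht (-((-D₁ᵀ) *ᵥ F t)) t) :
    ∀ s t : ℝ, Ham (v s) (ht s) = Ham (v t) (ht t) := by
  have hHam' : Ham = swEnergy Hb₂ H₁ T R hts g := funext fun _ ↦ funext (hHam _)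
  have hF' : ∀ t, F t = swMassFlux Hb₂ H₁ T₁s T₂s R (v t) (ht t) := fun t ↦ by
    rw [hF, hh0, hu, swMassFlux]
  have hB' : ∀ t, B t = swBernoulli Hb₂ H₁ T R hts g (v t) (ht t) := fun t ↦ by
    rw [hB, hu, swBernoulli]
  have hconst : ∀ t, HasDerivAt (fun s ↦ Ham (v s) (ht s)) 0 t := fun t ↦ by
    have hE := hasDerivAt_swEnergy R hts g hHb₂ hH₁ hT₁ hT₂ (hv t) (hh t)
    rw [neg_mulVec, neg_neg, ← hF', ← hB',
      transpose_mulVec_dotProduct_add_dotProduct_eq_zero D₁ (hQ t)] at hE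
    rwa [hHam']
  exact is_const_of_deriv_eq_zero (fun t ↦ (hconst t).differentiableAt) (fun t ↦ (hconst t).deriv)
end

section
/- Let V, E, C be finite index sets and D₁ : ℝ^V → ℝ^E, D₂ : ℝ^E → ℝ^C, D̄₂ := −D₁ᵀ linear maps with D₂ D₁ = 0. Let W : ℝ^E → ℝ^E and R : ℝ^V → ℝ^C be linear maps satisfying the partial Leibniz rule D₂ W = R D̄₂. Suppose differentiable curves v : ℝ → ℝ^E, h̃ : ℝ → ℝ^V satisfy v′ = −W F(t) − D₁ B(t) and h̃′ = −D̄₂ F(t) for functions F : ℝ → ℝ^E, B : ℝ → ℝ^V, and that D₂ v(0) + f = R h̃(0) for some fixed f ∈ ℝ^C. Then D₂ v(t) + f = R h̃(t) for all t: a uniform potential vorticity field q̃ ≡ 1 remains uniform for all time (PV compatibility / steady geostrophic modes). -/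
open Matrix

/-!
The residual `D₂ v − R h̃` has zero time derivative: differentiating, the gradient
term `D₂ D₁ B` vanishes because `D₂ D₁ = 0`, and the flux terms `D₂ W F` and `R D̄₂ F`
cancel by the partial Leibniz rule. Hence the residual keeps its initial value `−f`.
-/

theorem HasDerivAt.const_mulVec {m n : Type*} [Fintype m] [Fintype n] (A : Matrix m n ℝ)
    {u : ℝ → n → ℝ} {u' : n → ℝ} {t : ℝ} (hu : HasDerivAt u u' t) :
    HasDerivAt (fun s => A *ᵥ u s) (A *ᵥ u') t :=
  A.mulVecLin.toContinuousLinearMap.hasFDerivAt.comp_hasDerivAt t hu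

theorem Matrix.mulVec_neg_sub_mulVec_of_mul_eq {α V E E' C K : Type*} [Ring α]
    [Fintype V] [Fintype E] [Fintype E'] [Fintype K]
    {D₁ : Matrix E V α} {D₂ : Matrix C E α} (hDD : D₂ * D₁ = 0)
    {W : Matrix E E' α} {R : Matrix C K α} {G : Matrix K E' α}
    (hLeib : D₂ * W = R * G) (x : E' → α) (y : V → α) :
    D₂ *ᵥ (-(W *ᵥ x) - D₁ *ᵥ y) = R *ᵥ -(G *ᵥ x) := by
  rw [mulVec_sub, mulVec_neg, mulVec_neg, mulVec_mulVec, mulVec_mulVec, mulVec_mulVec,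
    hLeib, hDD, zero_mulVec, sub_zero]

theorem sub_eq_sub_of_hasDerivAt_eq {M : Type*} [NormedAddCommGroup M] [NormedSpace ℝ M]
    {a b g : ℝ → M} (ha : ∀ t, HasDerivAt a (g t) t) (hb : ∀ t, HasDerivAt b (g t) t)
    (t s : ℝ) : a t - b t = a s - b s := by
  have hab : ∀ t, HasDerivAt (a - b) 0 t := fun t => by
    simpa only [sub_self] using (ha t).sub (hb t)
  exact is_const_of_deriv_eq_zero (fun t => (hab t).differentiableAt) (fun t => (hab t).deriv) t s

/-- PV compatibility / steady geostrophic modes: with `D₂ D₁ = 0`,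
`D̄₂ := −D₁ᵀ`, and the partial Leibniz rule `D₂ W = R D̄₂`, if
`v′ = −W F − D₁ B`, `h̃′ = −D̄₂ F`, and initially `D₂ v(0) + f = R h̃(0)`
(uniform potential vorticity `q̃ ≡ 1`), then `D₂ v(t) + f = R h̃(t)` for all `t`. -/
theorem discrete_pv_compatibility_evolution
    {V E C : Type*} [Fintype V] [Fintype E] [Fintype C]
    (D₁ : Matrix E V ℝ) (D₂ : Matrix C E ℝ) (hDD : D₂ * D₁ = 0)
    (W : Matrix E E ℝ) (R : Matrix C V ℝ)
    (hLeib : D₂ * W = R * (-D₁ᵀ))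
    (v : ℝ → E → ℝ) (ht : ℝ → V → ℝ) (F : ℝ → E → ℝ) (B : ℝ → V → ℝ)
    (hv : ∀ t, HasDerivAt v (-(W *ᵥ F t) - D₁ *ᵥ B t) t)
    (hh : ∀ t, HasDerivAt ht (-((-D₁ᵀ) *ᵥ F t)) t)
    (f : C → ℝ) (h0 : D₂ *ᵥ v 0 + f = R *ᵥ ht 0) :
    ∀ t : ℝ, D₂ *ᵥ v t + f = R *ᵥ ht t := by
  intro t
  have hvorticity : ∀ s, HasDerivAt (fun s => D₂ *ᵥ v s) (R *ᵥ -((-D₁ᵀ) *ᵥ F s)) s :=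
    fun s => by
      simpa only [mulVec_neg_sub_mulVec_of_mul_eq hDD hLeib] using (hv s).const_mulVec D₂
  have hresidual := sub_eq_sub_of_hasDerivAt_eq hvorticity (fun s => (hh s).const_mulVec R) t 0
  linear_combination hresidual + h0
end

section
/- Let V, E, C be finite index sets, D₁ : ℝ^V → ℝ^E and D̄₁ : ℝ^C → ℝ^E linear maps, D₂ := D̄₁ᵀ, D̄₂ := −D₁ᵀ, with D₂ D₁ = 0. Let R : ℝ^V → ℝ^C be a linear map and Q : ℝ^C × ℝ^E → ℝ^E a bilinear map satisfying, for every q ∈ ℝ^C: (i) antisymmetry, zᵀ Q(q, y) = −yᵀ Q(q, z) for all y, z ∈ ℝ^E; and (ii) the partial Leibniz rule II, Q(q, D̄₁ q) = ½ D₁ (Rᵀ (q ⊙ q)), where ⊙ is the entrywise product. Suppose differentiable curves h̃ : ℝ → ℝ^V, v : ℝ → ℝ^E, q : ℝ → ℝ^C and functions F : ℝ → ℝ^E, B : ℝ → ℝ^V satisfy q(t) ⊙ (R h̃(t)) = D₂ v(t) + f for a fixed f ∈ ℝ^C, h̃′ = −D̄₂ F(t), and v′ = −Q(q(t), F(t))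 − D₁ B(t). Then the total potential enstrophy PE(t) := ½ Σ_c q_c(t)² (R h̃(t))_c is constant in t. -/
/-!
Write `m = R h̃` and `P = q ⊙ m = D₂ v + f`. The enstrophy rate is `q · P' - ½ (q ⊙ q) · m'`,
and `q · P' = (D̄₁ q) · v'` since `D₂ = D̄₁ᵀ`. In `v' = -Q(q, F) - D₁ B` the gradient part is
invisible to `D̄₁ q` because `D₂ D₁ = 0`, while antisymmetry of `Q` and the Leibniz rule II turn
the PV-flux part into `½ (q ⊙ q) · R D₁ᵀ F = ½ (q ⊙ q) · m'`, so the rate vanishes.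
-/

open Matrix

theorem HasDerivAt.matrix_mulVec {𝕜 m n : Type*} [NontriviallyNormedField 𝕜] [CompleteSpace 𝕜]
    [Fintype m] [Fintype n] (A : Matrix m n 𝕜) {x : 𝕜 → n → 𝕜} {x' : n → 𝕜} {t : 𝕜}
    (hx : HasDerivAt x x' t) : HasDerivAt (fun s => A *ᵥ x s) (A *ᵥ x') t :=
  (LinearMap.toContinuousLinearMap (mulVecLin A)).hasFDerivAt.comp_hasDerivAt t hx

def potentialEnstrophy {K C : Type*} [Field K] [Fintype C] (q m : C → K) : K :=
  1 / 2 * ∑ c, q c ^ 2 * m c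

/-- The rate is written through the tendency `q' * m + q * m'` of the PV relation `q ⊙ m`. -/
theorem hasDerivAt_potentialEnstrophy {𝕜 C : Type*} [NontriviallyNormedField 𝕜] [CharZero 𝕜]
    [Fintype C] {q m : 𝕜 → C → 𝕜} {q' m' : C → 𝕜} {t : 𝕜}
    (hq : HasDerivAt q q' t) (hm : HasDerivAt m m' t) :
    HasDerivAt (fun s => potentialEnstrophy (q s) (m s))
      (q t ⬝ᵥ (q' * m t + q t * m') - 1 / 2 * ((q t * q t) ⬝ᵥ m')) t := by
  have hterm : ∀ c, HasDerivAt (fun s => q s c ^ 2 * m s c)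
      (2 * q t c * q' c * m t c + q t c ^ 2 * m' c) t := fun c => by
    simpa using ((hasDerivAt_pi.mp hq c).fun_pow 2).fun_mul (hasDerivAt_pi.mp hm c)
  refine ((HasDerivAt.fun_sum fun c _ => hterm c).const_mul (1 / 2 : 𝕜)).congr_deriv ?_
  simp only [dotProduct, Pi.mul_apply, Pi.add_apply, Finset.mul_sum, ← Finset.sum_sub_distrib]
  refine Finset.sum_congr rfl fun c _ => ?_
  field_simp
  ring

theorem dotProduct_curl_momentumTendency {K V E C : Type*} [Field K]
    [Fintype V] [Fintype E] [Fintype C]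
    {D₁ : Matrix E V K} {Db₁ : Matrix E C K} (hDD : Db₁ᵀ * D₁ = 0) (R : Matrix C V K)
    (Q : (C → K) →ₗ[K] (E → K) →ₗ[K] (E → K)) (q : C → K)
    (hQanti : ∀ y z : E → K, z ⬝ᵥ Q q y = -(y ⬝ᵥ Q q z))
    (hQleib : Q q (Db₁ *ᵥ q) = (1 / 2 : K) • (D₁ *ᵥ (Rᵀ *ᵥ (q * q))))
    (F : E → K) (B : V → K) :
    q ⬝ᵥ (Db₁ᵀ *ᵥ (-Q q F - D₁ *ᵥ B)) = 1 / 2 * ((q * q) ⬝ᵥ (R *ᵥ (D₁ᵀ *ᵥ F))) := by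
  have hgrad : q ⬝ᵥ (Db₁ᵀ *ᵥ (D₁ *ᵥ B)) = 0 := by
    rw [mulVec_mulVec, hDD, zero_mulVec, dotProduct_zero]
  have hflux : q ⬝ᵥ (Db₁ᵀ *ᵥ Q q F) = -(F ⬝ᵥ Q q (Db₁ *ᵥ q)) := by
    rw [dotProduct_mulVec, vecMul_transpose, hQanti]
  rw [mulVec_sub, dotProduct_sub, hgrad, sub_zero, mulVec_neg, dotProduct_neg, hflux, neg_neg,
    hQleib, dotProduct_smul, smul_eq_mul, dotProduct_mulVec _ R, dotProduct_mulVec,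
    mulVec_transpose, mulVec_transpose, dotProduct_comm]

/-- Total potential enstrophy conservation: with `D₂ := D̄₁ᵀ`, `D̄₂ := −D₁ᵀ`,
`D₂ D₁ = 0`, a bilinear PV-flux wedge product `Q` satisfying antisymmetry
`zᵀ Q(q, y) = −yᵀ Q(q, z)` and the partial Leibniz rule II
`Q(q, D̄₁q) = ½ D₁ (Rᵀ (q ⊙ q))`, if the curves satisfy
`q ⊙ (R h̃) = D₂ v + f`, `h̃′ = −D̄₂ F` and `v′ = −Q(q, F) − D₁ B`, then the total
potential enstrophy `PE(t) = ½ Σ_c q_c(t)² (R h̃(t))_c` is constant. -/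
theorem discrete_potential_enstrophy_conservation
    {V E C : Type*} [Fintype V] [Fintype E] [Fintype C]
    (D₁ : Matrix E V ℝ) (Db₁ : Matrix E C ℝ)
    (hDD : Db₁ᵀ * D₁ = 0)
    (R : Matrix C V ℝ)
    (Q : (C → ℝ) →ₗ[ℝ] (E → ℝ) →ₗ[ℝ] (E → ℝ))
    (hQanti : ∀ (q : C → ℝ) (y z : E → ℝ), z ⬝ᵥ Q q y = -(y ⬝ᵥ Q q z))
    (hQleib : ∀ q : C → ℝ,
      Q q (Db₁ *ᵥ q) = (1 / 2 : ℝ) • (D₁ *ᵥ (Rᵀ *ᵥ (q * q))))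
    (ht : ℝ → V → ℝ) (v : ℝ → E → ℝ) (q : ℝ → C → ℝ)
    (hq : Differentiable ℝ q)
    (F : ℝ → E → ℝ) (B : ℝ → V → ℝ) (f : C → ℝ)
    (hpv : ∀ t, q t * (R *ᵥ ht t) = Db₁ᵀ *ᵥ v t + f)
    (hh : ∀ t, HasDerivAt ht (-((-D₁ᵀ) *ᵥ F t)) t)
    (hv : ∀ t, HasDerivAt v (-Q (q t) (F t) - D₁ *ᵥ B t) t) :
    ∀ s t : ℝ,
      (1 / 2 : ℝ) * ∑ c, (q s c) ^ 2 * (R *ᵥ ht s) c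
        = (1 / 2 : ℝ) * ∑ c, (q t c) ^ 2 * (R *ᵥ ht t) c := by
  have hPE : ∀ t, HasDerivAt (fun s => potentialEnstrophy (q s) (R *ᵥ ht s)) 0 t := by
    intro t
    have hm := (hh t).matrix_mulVec R
    have hPV : HasDerivAt (fun s => q s * (R *ᵥ ht s))
        (Db₁ᵀ *ᵥ (-Q (q t) (F t) - D₁ *ᵥ B t)) t := by
      simpa only [hpv] using ((hv t).matrix_mulVec Db₁ᵀ).add_const f
    refine (hasDerivAt_potentialEnstrophy (hq t).hasDerivAt hm).congr_deriv ?_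
    rw [((hq t).hasDerivAt.mul hm).unique hPV,
      dotProduct_curl_momentumTendency hDD R Q (q t) (hQanti (q t)) (hQleib (q t)),
      neg_mulVec, neg_neg, sub_self]
  exact is_const_of_deriv_eq_zero (fun x => (hPE x).differentiableAt) fun x => (hPE x).deriv
end

section
/- Let V, E, C be finite index sets, D₁ : ℝ^V → ℝ^E and D̄₁ : ℝ^C → ℝ^E linear maps with D̄₁𝟙_C = 0, and set D₂ := D̄₁ᵀ, D̄₂ := −D₁ᵀ. Let W : ℝ^C × ℝ^E → ℝ^E, R : ℝ^C × ℝ^V → ℝ^C, and S : ℝ^C × ℝ^C → ℝ^V be bilinear maps such that: (i) S is the adjoint of R with respect to the topological pairing, i.e. hᵀ S(x, y) = yᵀ R(x, h) for all x, y ∈ ℝ^C and h ∈ ℝ^V; (ii) W is antisymmetric in its second argument, i.e. zᵀ W(x, y) = −yᵀ W(x, z) for all x ∈ ℝ^C, y, z ∈ ℝ^E; and (iii) W satisfies the full discrete Leibniz rule W(x, D̄₁ y) + W(y, D̄₁ x) = D₁ S(x, y) for all x, y ∈ ℝ^C. Then the partial Leibniz rule I (PV compatibility) holds: D₂ (W(𝟙_C,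 z)) = R(𝟙_C, D̄₂ z) for all z ∈ ℝ^E. -/
open Matrix

/-- The full discrete Leibniz rule plus antisymmetry of the wedge product `W`
and adjointness of `S` to `R` imply the partial Leibniz rule I (PV
compatibility): `D₂ (W(𝟙, z)) = R(𝟙, D̄₂ z)` with `D₂ := D̄₁ᵀ`, `D̄₂ := −D₁ᵀ`
and `D̄₁ 𝟙 = 0`. -/
theorem full_leibniz_implies_pv_compatibility
    {V E C : Type*} [Fintype V] [Fintype E] [Fintype C]
    (D₁ : Matrix E V ℝ) (Db₁ : Matrix E C ℝ)
    (hDb₁ : Db₁ *ᵥ (fun _ => (1 : ℝ)) = 0)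
    (W : (C → ℝ) →ₗ[ℝ] (E → ℝ) →ₗ[ℝ] (E → ℝ))
    (R : (C → ℝ) →ₗ[ℝ] (V → ℝ) →ₗ[ℝ] (C → ℝ))
    (S : (C → ℝ) →ₗ[ℝ] (C → ℝ) →ₗ[ℝ] (V → ℝ))
    (hS : ∀ (x y : C → ℝ) (h : V → ℝ), h ⬝ᵥ S x y = y ⬝ᵥ R x h)
    (hW : ∀ (x : C → ℝ) (y z : E → ℝ), z ⬝ᵥ W x y = -(y ⬝ᵥ W x z))
    (hLeib : ∀ x y : C → ℝ,
      W x (Db₁ *ᵥ y) + W y (Db₁ *ᵥ x) = D₁ *ᵥ S x y) :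
    ∀ z : E → ℝ,
      Db₁ᵀ *ᵥ W (fun _ => (1 : ℝ)) z
        = R (fun _ => (1 : ℝ)) ((-D₁ᵀ) *ᵥ z) := by
  intro z
  set one : C → ℝ := fun _ => (1 : ℝ) with hone
  have hWone : ∀ y : C → ℝ, W one (Db₁ *ᵥ y) = D₁ *ᵥ S one y := by
    intro y
    have h := hLeib one y
    rw [hDb₁] at h
    simpa using h
  have key : ∀ y : C → ℝ,
      y ⬝ᵥ (Db₁ᵀ *ᵥ W one z) = y ⬝ᵥ R one ((-D₁ᵀ) *ᵥ z) := by
    intro y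
    calc y ⬝ᵥ (Db₁ᵀ *ᵥ W one z)
        = (Db₁ *ᵥ y) ⬝ᵥ W one z := by
          rw [dotProduct_mulVec, vecMul_transpose]
      _ = -(z ⬝ᵥ W one (Db₁ *ᵥ y)) := by
          rw [hW one z (Db₁ *ᵥ y)]
      _ = -(z ⬝ᵥ (D₁ *ᵥ S one y)) := by rw [hWone y]
      _ = ((-D₁ᵀ) *ᵥ z) ⬝ᵥ S one y := by
          rw [dotProduct_mulVec]
          simp [mulVec_transpose, neg_dotProduct, neg_mulVec]
      _ = y ⬝ᵥ R one ((-D₁ᵀ) *ᵥ z) := hS one y _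
  classical
  funext c
  have h := key (Pi.single c 1)
  simpa [dotProduct, Pi.single_apply, Finset.sum_ite_eq] using h
end

section
/- Let V, E be finite index sets, H̄₂ : ℝ^V → ℝ^V and H₁ : ℝ^E → ℝ^E symmetric linear maps, T : ℝ^E × ℝ^E → ℝ^V a bilinear map with adjoints T₁*, T₂* : ℝ^V × ℝ^E → ℝ^E defined by xᵀ T(a, b) = aᵀ T₁*(x, b) = bᵀ T₂*(x, a) for all x ∈ ℝ^V and a, b ∈ ℝ^E. Fix R ∈ ℝ^E, h̃ₛ ∈ ℝ^V, g ∈ ℝ, and define the discrete shallow-water Hamiltonian H : ℝ^E × ℝ^V → ℝ by H(v, h̃) := (g/2) h̃ᵀ H̄₂ h̃ + g h̃ᵀ H̄₂ h̃ₛ + ½ (H̄₂ h̃)ᵀ T(u, H₁ u) with u := v − R. Then H is differentiable, and its derivative at (v, h̃) in direction (δv, δh̃) equals δvᵀ F + δh̃ᵀ B, where the functional derivatives are F := ½ T₁*(h⁰, H₁ u) + ½ H₁ T₂*(h⁰, u) (the mass flux) and B := g H̄₂ (h̃ + h̃ₛ) + ½ H̄₂ T(u, H₁ u) (the Bernoulli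 function), with h⁰ := H̄₂ h̃. -/
open Matrix

/-- The continuous linear functional `(δv, δh̃) ↦ δv ⬝ᵥ F + δh̃ ⬝ᵥ B`. -/
noncomputable def dotPairCLM {E V : Type*} [Fintype E] [Fintype V]
    (F : E → ℝ) (B : V → ℝ) : ((E → ℝ) × (V → ℝ)) →L[ℝ] ℝ :=
  LinearMap.toContinuousLinearMap
    { toFun := fun p => p.1 ⬝ᵥ F + p.2 ⬝ᵥ B
      map_add' := by
        intro p q
        simp [add_dotProduct]
        ring
      map_smul' := by
        intro c p
        simp [smul_dotProduct, smul_eq_mul]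
        ring }

/-! Every term of `H` is a dot product of two factors that are affine or bilinear in `(v, h̃)`,
so the Leibniz rule gives its derivative. Symmetry of `H̄₂`, `H₁` and the adjoint relations of
`T` then move the variations `δv`, `δh̃` to the left of every dot product, and the vectors paired
with them there are the functional derivatives. -/

theorem HasFDerivAt.dotProduct {𝕜 X ι : Type*} [NontriviallyNormedField 𝕜] [CompleteSpace 𝕜]
    [NormedAddCommGroup X] [NormedSpace 𝕜 X] [Fintype ι]
    {f g : X → ι → 𝕜} {f' g' : X →L[𝕜] ι → 𝕜} {x : X} {L : X →L[𝕜] 𝕜}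
    (hf : HasFDerivAt f f' x) (hg : HasFDerivAt g g' x)
    (hL : ∀ δ, L δ = f' δ ⬝ᵥ g x + f x ⬝ᵥ g' δ) :
    HasFDerivAt (fun y => f y ⬝ᵥ g y) L x := by
  refine ((dotProductBilin 𝕜 𝕜 : (ι → 𝕜) →ₗ[𝕜] (ι → 𝕜) →ₗ[𝕜] 𝕜).toContinuousBilinearMap
    |>.hasFDerivAt_of_bilinear hf hg).congr_fderiv <| ContinuousLinearMap.ext fun δ => ?_
  simp [hL, add_comm]

theorem Matrix.dotProduct_mulVec_of_transpose_eq {n R : Type*} [Fintype n] [CommSemiring R]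
    {M : Matrix n n R} (hM : Mᵀ = M) (x y : n → R) : x ⬝ᵥ (M *ᵥ y) = (M *ᵥ x) ⬝ᵥ y := by
  rw [dotProduct_mulVec, ← mulVec_transpose, hM]

section FunctionalDerivative

variable {E V : Type*} [Fintype E] [Fintype V]

@[simp]
theorem dotPairCLM_apply (F : E → ℝ) (B : V → ℝ) (δ : (E → ℝ) × (V → ℝ)) :
    dotPairCLM F B δ = δ.1 ⬝ᵥ F + δ.2 ⬝ᵥ B :=
  rfl

theorem dotPairCLM_add (F₁ F₂ : E → ℝ) (B₁ B₂ : V → ℝ) :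
    dotPairCLM F₁ B₁ + dotPairCLM F₂ B₂ = dotPairCLM (F₁ + F₂) (B₁ + B₂) :=
  ContinuousLinearMap.ext fun δ => by
    simp only [_root_.add_apply, dotPairCLM_apply, dotProduct_add]
    ring

theorem dotPairCLM_smul (c : ℝ) (F : E → ℝ) (B : V → ℝ) :
    c • dotPairCLM F B = dotPairCLM (c • F) (c • B) :=
  ContinuousLinearMap.ext fun δ => by
    simp only [_root_.smul_apply, dotPairCLM_apply, dotProduct_smul, smul_eq_mul]
    ring

theorem hasFDerivAt_snd_dotProduct (w : V → ℝ) (p : (E → ℝ) × (V → ℝ)) :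
    HasFDerivAt (fun p : (E → ℝ) × (V → ℝ) => p.2 ⬝ᵥ w) (dotPairCLM 0 w) p :=
  hasFDerivAt_snd.dotProduct (hasFDerivAt_const w p) fun δ => by simp

theorem hasFDerivAt_snd_dotProduct_mulVec_snd {M : Matrix V V ℝ} (hM : Mᵀ = M)
    (p : (E → ℝ) × (V → ℝ)) :
    HasFDerivAt (fun p : (E → ℝ) × (V → ℝ) => p.2 ⬝ᵥ (M *ᵥ p.2))
      (dotPairCLM 0 ((2 : ℝ) • (M *ᵥ p.2))) p := by
  refine hasFDerivAt_snd.dotProduct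
    (M.mulVecLin.toContinuousLinearMap.hasFDerivAt.comp p hasFDerivAt_snd) fun δ => ?_
  simp only [dotPairCLM_apply, ContinuousLinearMap.comp_apply, ContinuousLinearMap.coe_snd',
    LinearMap.coe_toContinuousLinearMap', mulVecLin_apply, dotProduct_zero, dotProduct_smul,
    smul_eq_mul, zero_add]
  rw [dotProduct_mulVec_of_transpose_eq hM, dotProduct_comm]
  ring

/-- `h⁰ ⬝ᵥ T(u, H₁u)` with `h⁰ = H̄₂ h̃`, `u = v - R`: twice the kinetic energy. -/
theorem hasFDerivAt_kineticEnergy {Hb₂ : Matrix V V ℝ} {H₁ : Matrix E E ℝ}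
    (hHb₂ : Hb₂ᵀ = Hb₂) (hH₁ : H₁ᵀ = H₁)
    {T : (E → ℝ) →ₗ[ℝ] (E → ℝ) →ₗ[ℝ] (V → ℝ)}
    {T₁s T₂s : (V → ℝ) →ₗ[ℝ] (E → ℝ) →ₗ[ℝ] (E → ℝ)}
    (hT₁ : ∀ (x : V → ℝ) (a b : E → ℝ), x ⬝ᵥ T a b = a ⬝ᵥ T₁s x b)
    (hT₂ : ∀ (x : V → ℝ) (a b : E → ℝ), x ⬝ᵥ T a b = b ⬝ᵥ T₂s x a)
    (R v : E → ℝ) (ht : V → ℝ) :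
    HasFDerivAt
      (fun p : (E → ℝ) × (V → ℝ) => (Hb₂ *ᵥ p.2) ⬝ᵥ T (p.1 - R) (H₁ *ᵥ (p.1 - R)))
      (dotPairCLM (T₁s (Hb₂ *ᵥ ht) (H₁ *ᵥ (v - R)) + H₁ *ᵥ T₂s (Hb₂ *ᵥ ht) (v - R))
        (Hb₂ *ᵥ T (v - R) (H₁ *ᵥ (v - R)))) (v, ht) := by
  have hu : HasFDerivAt (fun p : (E → ℝ) × (V → ℝ) => p.1 - R)
      (ContinuousLinearMap.fst ℝ (E → ℝ) (V → ℝ)) (v, ht) :=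
    hasFDerivAt_fst.sub_const R
  have hH₁u := H₁.mulVecLin.toContinuousLinearMap.hasFDerivAt.comp (v, ht) hu
  have hwedge := T.toContinuousBilinearMap.hasFDerivAt_of_bilinear hu hH₁u
  have hh₀ := Hb₂.mulVecLin.toContinuousLinearMap.hasFDerivAt.comp (v, ht) hasFDerivAt_snd
  refine hh₀.dotProduct hwedge fun δ => ?_
  simp only [_root_.add_apply, ContinuousLinearMap.comp_apply,
    ContinuousLinearMap.precompR_apply, ContinuousLinearMap.precompL_apply,
    ContinuousLinearMap.compL_apply, LinearMap.toContinuousBilinearMap_apply,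
    LinearMap.coe_toContinuousLinearMap', Function.comp_apply, mulVecLin_apply,
    ContinuousLinearMap.coe_fst', ContinuousLinearMap.coe_snd', dotPairCLM_apply,
    dotProduct_add]
  rw [dotProduct_mulVec_of_transpose_eq hH₁, dotProduct_mulVec_of_transpose_eq hHb₂,
    ← hT₁, ← hT₂]
  ring

end FunctionalDerivative

/-- Functional derivatives of the discrete shallow-water Hamiltonian
`H(v, h̃) = (g/2) h̃ᵀH̄₂h̃ + g h̃ᵀH̄₂h̃ₛ + ½ (H̄₂h̃)ᵀ T(u, H₁u)`, `u = v − R`: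
`H` is differentiable and its derivative at `(v, h̃)` in direction `(δv, δh̃)`
is `δvᵀ F + δh̃ᵀ B`, where `F = ½ T₁*(h⁰, H₁u) + ½ H₁ T₂*(h⁰, u)` (mass flux)
and `B = g H̄₂(h̃ + h̃ₛ) + ½ H̄₂ T(u, H₁u)` (Bernoulli function), `h⁰ = H̄₂ h̃`. -/
theorem discrete_hamiltonian_functional_derivatives
    {V E : Type*} [Fintype V] [Fintype E]
    (Hb₂ : Matrix V V ℝ) (H₁ : Matrix E E ℝ)
    (hHb₂ : Hb₂ᵀ = Hb₂) (hH₁ : H₁ᵀ = H₁)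
    (T : (E → ℝ) →ₗ[ℝ] (E → ℝ) →ₗ[ℝ] (V → ℝ))
    (T₁s T₂s : (V → ℝ) →ₗ[ℝ] (E → ℝ) →ₗ[ℝ] (E → ℝ))
    (hT₁ : ∀ (x : V → ℝ) (a b : E → ℝ), x ⬝ᵥ T a b = a ⬝ᵥ T₁s x b)
    (hT₂ : ∀ (x : V → ℝ) (a b : E → ℝ), x ⬝ᵥ T a b = b ⬝ᵥ T₂s x a)
    (R : E → ℝ) (hts : V → ℝ) (g : ℝ) :
    ∀ (v : E → ℝ) (ht : V → ℝ),
      HasFDerivAt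
        (fun p : (E → ℝ) × (V → ℝ) =>
          (g / 2) * (p.2 ⬝ᵥ (Hb₂ *ᵥ p.2)) + g * (p.2 ⬝ᵥ (Hb₂ *ᵥ hts))
            + (1 / 2) * ((Hb₂ *ᵥ p.2) ⬝ᵥ T (p.1 - R) (H₁ *ᵥ (p.1 - R))))
        (dotPairCLM
          ((1 / 2 : ℝ) • T₁s (Hb₂ *ᵥ ht) (H₁ *ᵥ (v - R))
            + (1 / 2 : ℝ) • (H₁ *ᵥ T₂s (Hb₂ *ᵥ ht) (v - R)))
          (g • (Hb₂ *ᵥ (ht + hts))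
            + (1 / 2 : ℝ) • (Hb₂ *ᵥ T (v - R) (H₁ *ᵥ (v - R)))))
        (v, ht) := by
  intro v ht
  have hH := (((hasFDerivAt_snd_dotProduct_mulVec_snd hHb₂ (v, ht)).const_mul (g / 2)).add
      ((hasFDerivAt_snd_dotProduct (Hb₂ *ᵥ hts) (v, ht)).const_mul g)).add
    ((hasFDerivAt_kineticEnergy hHb₂ hH₁ hT₁ hT₂ R v ht).const_mul (1 / 2))
  simp only [dotPairCLM_smul, dotPairCLM_add] at hH
  refine hH.congr_fderiv (congrArg₂ dotPairCLM ?_ ?_)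
  · module
  · rw [mulVec_add]
    module
end
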